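/- arXiv:1909.01838 — 2 statements merged into one kernel-verified Lean document; each statement's English description precedes it below -/
import Mathlib

section
/- Let a, b : Fin k → ℝ with a i < b i for all i, and define for x : Fin k → ℝ the quantity S(x) = ∑ i, (2/(b i - a i))·(ReLU(x i - a i) + ReLU(x i - b i) - 2·ReLU(x i - (a i + b i)/2)). Then ReLU(S(x) - (k - 1)) ≠ 0 implies a i < x i < b i for all i. -/
lemma relu_T_le (a b x : ℝ) (hab : a < b) :
    max 0 (x - a) + max 0 (x - b) - 2 * max 0 (x - (a + b) / 2) ≤ (b - a) / 2 := by
  rcases le_total x ((a + b) / 2) with h | h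
  · have hb : max 0 (x - b) = 0 := max_eq_left (by linarith)
    have hm : max 0 (x - (a + b) / 2) = 0 := max_eq_left (by linarith)
    have ha : max 0 (x - a) ≤ (b - a) / 2 := max_le (by linarith) (by linarith)
    linarith
  · have hm : max 0 (x - (a + b) / 2) = x - (a + b) / 2 := max_eq_right (by linarith)
    have ha : max 0 (x - a) = x - a := max_eq_right (by linarith)
    rcases le_total x b with h2 | h2
    · have hb : max 0 (x - b) = 0 := max_eq_left (by linarith)
      rw [ha, hb, hm]; linarith
    · have hb : max 0 (x - b) = x - b := max_eq_right (by linarith)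
      rw [ha, hb, hm]; linarith

lemma relu_T_pos (a b x : ℝ) (hab : a < b)
    (h : 0 < max 0 (x - a) + max 0 (x - b) - 2 * max 0 (x - (a + b) / 2)) :
    a < x ∧ x < b := by
  constructor
  · by_contra hc
    push_neg at hc
    have ha : max 0 (x - a) = 0 := max_eq_left (by linarith)
    have hb : max 0 (x - b) = 0 := max_eq_left (by linarith)
    have hm : 0 ≤ max 0 (x - (a + b) / 2) := le_max_left _ _
    linarith
  · by_contra hc
    push_neg at hc
    have ha : max 0 (x - a) = x - a := max_eq_right (by linarith)
    have hb : max 0 (x - b) = x - b := max_eq_right (by linarith)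
    have hm : max 0 (x - (a + b) / 2) = x - (a + b) / 2 := max_eq_right (by linarith)
    rw [ha, hb, hm] at h; linarith

theorem rectangle_gadget (k : ℕ) (a b : Fin k → ℝ) (hab : ∀ i, a i < b i)
    (x : Fin k → ℝ)
    (h : max 0 ((∑ i, (2 / (b i - a i)) *
        (max 0 (x i - a i) + max 0 (x i - b i)
          - 2 * max 0 (x i - (a i + b i) / 2))) - ((k : ℝ) - 1)) ≠ 0) :
    ∀ i, a i < x i ∧ x i < b i := by
  set f : Fin k → ℝ := fun i => (2 / (b i - a i)) *
      (max 0 (x i - a i) + max 0 (x i - b i)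
        - 2 * max 0 (x i - (a i + b i) / 2)) with hf
  have hS : (k : ℝ) - 1 < ∑ i, f i := by
    by_contra hc
    push_neg at hc
    exact h (max_eq_left (by linarith))
  have hpos : ∀ i, 0 < 2 / (b i - a i) := fun i =>
    div_pos two_pos (by linarith [hab i])
  have hle1 : ∀ i, f i ≤ 1 := by
    intro i
    have hT := relu_T_le (a i) (b i) (x i) (hab i)
    have := mul_le_mul_of_nonneg_left hT (le_of_lt (hpos i))
    have heq : (2 / (b i - a i)) * ((b i - a i) / 2) = 1 := by
      rw [div_mul_div_comm]; rw [div_eq_one_iff_eq (by nlinarith [hab i])]; ring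
    rw [heq] at this
    exact this
  intro i
  by_contra hc
  have hTnp : f i ≤ 0 := by
    rcases le_or_gt (max 0 (x i - a i) + max 0 (x i - b i)
        - 2 * max 0 (x i - (a i + b i) / 2)) 0 with hT | hT
    · exact mul_nonpos_of_nonneg_of_nonpos (le_of_lt (hpos i)) hT
    · exact absurd (relu_T_pos (a i) (b i) (x i) (hab i) hT) hc
  have hsum : ∑ j, f j ≤ (k : ℝ) - 1 := by
    have h1 : ∑ j, f j = f i + ∑ j ∈ Finset.univ.erase i, f j :=
      (Finset.add_sum_erase _ f (Finset.mem_univ i)).symm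
    have h2 : ∑ j ∈ Finset.univ.erase i, f j ≤
        ∑ _j ∈ Finset.univ.erase i, (1 : ℝ) :=
      Finset.sum_le_sum fun j _ => hle1 j
    have h3 : ∑ _j ∈ Finset.univ.erase i, (1 : ℝ) = (k : ℝ) - 1 := by
      rw [Finset.sum_const, Finset.card_erase_of_mem (Finset.mem_univ i)]
      simp only [Finset.card_univ, Fintype.card_fin, nsmul_eq_mul, mul_one]
      have hk : 1 ≤ k := Nat.one_le_iff_ne_zero.mpr (by
        rintro rfl; exact absurd i.2 (by simp))
      push_cast [Nat.cast_sub hk]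
      ring
    linarith
  linarith
end

section
/- Let v : Fin d → ℕ and T : ℕ. Define g(s) = ReLU(s - (T - 1/2)) + ReLU(s - (T + 1/2)) - 2·ReLU(s - T) as a function ℝ → ℝ. Then there exists x : Fin d → ({0,1} : Set ℝ) (a 0/1 vector) with g(∑ i, x i * v i) ≠ 0 if and only if there exists a subset S ⊆ Fin d with ∑ i ∈ S, v i = T. -/
lemma g_ne_zero_iff (n T : ℕ) :
    max 0 ((n : ℝ) - ((T : ℝ) - 1 / 2)) + max 0 ((n : ℝ) - ((T : ℝ) + 1 / 2))
      - 2 * max 0 ((n : ℝ) - (T : ℝ)) ≠ 0 ↔ n = T := by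
  rcases lt_trichotomy n T with h | h | h
  · have hn : (n : ℝ) + 1 ≤ (T : ℝ) := by exact_mod_cast h
    rw [max_eq_left (by linarith), max_eq_left (by linarith), max_eq_left (by linarith)]
    simp [h.ne]
  · subst h
    rw [max_eq_right (by linarith), max_eq_left (by linarith), max_eq_left (by linarith)]
    norm_num
  · have hn : (T : ℝ) + 1 ≤ (n : ℝ) := by exact_mod_cast h
    rw [max_eq_right (by linarith), max_eq_right (by linarith), max_eq_right (by linarith)]
    constructor
    · intro hc; exact absurd (by ring) hc
    · intro he; exact absurd he h.ne'

theorem subset_sum_reduction (d : ℕ) (v : Fin d → ℕ) (T : ℕ) :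
    (∃ x : Fin d → ℝ, (∀ i, x i ∈ ({0, 1} : Set ℝ)) ∧
      max 0 ((∑ i, x i * (v i : ℝ)) - ((T : ℝ) - 1 / 2))
        + max 0 ((∑ i, x i * (v i : ℝ)) - ((T : ℝ) + 1 / 2))
        - 2 * max 0 ((∑ i, x i * (v i : ℝ)) - (T : ℝ)) ≠ 0) ↔
    (∃ S : Finset (Fin d), ∑ i ∈ S, v i = T) := by
  constructor
  · rintro ⟨x, hx, hg⟩
    refine ⟨Finset.univ.filter (fun i => x i = 1), ?_⟩
    have hsum : (∑ i, x i * (v i : ℝ))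
        = ((∑ i ∈ Finset.univ.filter (fun i => x i = 1), v i : ℕ) : ℝ) := by
      push_cast
      rw [Finset.sum_filter]
      apply Finset.sum_congr rfl
      intro i _
      rcases hx i with h0 | h1
      · simp [Set.mem_singleton_iff.mp h0]
      · simp [Set.mem_singleton_iff.mp h1]
    rw [hsum] at hg
    exact (g_ne_zero_iff _ T).mp hg
  · rintro ⟨S, hS⟩
    refine ⟨fun i => if i ∈ S then 1 else 0, fun i => ?_, ?_⟩
    · by_cases h : i ∈ S <;> simp [h]
    · have hsum : (∑ i, (if i ∈ S then (1:ℝ) else 0) * (v i : ℝ)) = ((T : ℕ) : ℝ) := by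
        rw [← hS]
        push_cast
        simp [ite_mul, Finset.sum_ite_mem]
      rw [hsum]
      exact (g_ne_zero_iff T T).mpr rfl
end
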